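/- arXiv:2409.20265 — 5 statements merged into one kernel-verified Lean document; each statement's English description precedes it below -/
import Mathlib

section
/- Let n ≥ 1. For all z, w ∈ T_B one has 2|ρ(z,w)| ≥ max{ ρ(z), ρ(w) }. -/
open MeasureTheory Complex ComplexConjugate

noncomputable section

/-- The tube domain `T_B ⊆ ℂ^(n+1)` (paper dimension `n+1 ≥ 1`). -/
def TB (n : ℕ) : Set (Fin (n + 1) → ℂ) :=
  {z | ∑ k : Fin n, (z k.castSucc).im ^ 2 < (z (Fin.last n)).im}

/-- `ρ(z) = y_n − |y'|²`. -/
def rho (n : ℕ) (z : Fin (n + 1) → ℂ) : ℝ :=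
  (z (Fin.last n)).im - ∑ k : Fin n, (z k.castSucc).im ^ 2

/-- `ρ(z,w) = (1/4)(Σ (z_k − conj w_k)² − 2i(z_n − conj w_n))`. -/
def rho2 (n : ℕ) (z w : Fin (n + 1) → ℂ) : ℂ :=
  (1 / 4) * ((∑ k : Fin n, (z k.castSucc - conj (w k.castSucc)) ^ 2)
    - 2 * Complex.I * (z (Fin.last n) - conj (w (Fin.last n))))

/-- The point `𝐢 = (0,…,0,i) ∈ T_B`. -/
def iPt (n : ℕ) : Fin (n + 1) → ℂ := fun j => if j = Fin.last n then Complex.I else 0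

/-- `c_α = Γ(n+1+α)/(2^(n+1) πⁿ Γ(α+1))` (paper `n` = `n+1` here). -/
def cA (n : ℕ) (α : ℝ) : ℝ :=
  Real.Gamma ((n : ℝ) + 2 + α) / (2 ^ (n + 2) * Real.pi ^ (n + 1) * Real.Gamma (α + 1))

/-- Wirtinger derivative `∂g/∂z_j = (1/2)(∂g/∂x_j − i ∂g/∂y_j)`. -/
def wdz (n : ℕ) (j : Fin (n + 1)) (g : (Fin (n + 1) → ℂ) → ℂ) : (Fin (n + 1) → ℂ) → ℂ :=
  fun z => (1 / 2) * (fderiv ℝ g z (Pi.single j 1) - Complex.I * fderiv ℝ g z (Pi.single j Complex.I))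

/-- Wirtinger derivative `∂g/∂z̄_j = (1/2)(∂g/∂x_j + i ∂g/∂y_j)`. -/
def wdzbar (n : ℕ) (j : Fin (n + 1)) (g : (Fin (n + 1) → ℂ) → ℂ) : (Fin (n + 1) → ℂ) → ℂ :=
  fun z => (1 / 2) * (fderiv ℝ g z (Pi.single j 1) + Complex.I * fderiv ℝ g z (Pi.single j Complex.I))


lemma re_sub_conj_sq (a b : ℂ) :
    ((a - conj b) ^ 2).re = normSq (a - b) - 2 * a.im ^ 2 - 2 * b.im ^ 2 := by
  simp only [pow_two, mul_re, sub_re, sub_im, conj_re, conj_im, normSq_apply]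
  ring

lemma four_mul_re_rho2 (n : ℕ) (z w : Fin (n + 1) → ℂ) :
    4 * (rho2 n z w).re = 2 * rho n z + 2 * rho n w
      + ∑ k : Fin n, normSq (z k.castSucc - w k.castSucc) := by
  simp only [rho2, rho, mul_re, sub_re, sub_im, re_sum, re_sub_conj_sq, conj_re, conj_im,
    Finset.sum_sub_distrib, ← Finset.mul_sum]
  norm_num
  ring

lemma rho_add_rho_le_two_mul_re_rho2 (n : ℕ) (z w : Fin (n + 1) → ℂ) :
    rho n z + rho n w ≤ 2 * (rho2 n z w).re := by
  have hid := four_mul_re_rho2 n z w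
  have hsum : 0 ≤ ∑ k : Fin n, normSq (z k.castSucc - w k.castSucc) :=
    Finset.sum_nonneg fun k _ => normSq_nonneg _
  linarith

lemma rho_pos_of_mem_TB {n : ℕ} {z : Fin (n + 1) → ℂ} (hz : z ∈ TB n) : 0 < rho n z :=
  sub_pos.mpr hz

theorem stmt9 (n : ℕ) (z w : Fin (n + 1) → ℂ) (hz : z ∈ TB n) (hw : w ∈ TB n) :
    max (rho n z) (rho n w) ≤ 2 * ‖rho2 n z w‖ :=
  calc max (rho n z) (rho n w)
      ≤ rho n z + rho n w :=
        max_le_add_of_nonneg (rho_pos_of_mem_TB hz).le (rho_pos_of_mem_TB hw).le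
    _ ≤ 2 * (rho2 n z w).re := rho_add_rho_le_two_mul_re_rho2 n z w
    _ ≤ 2 * ‖rho2 n z w‖ := by gcongr; exact re_le_norm _
end
end

section
/- Let n ≥ 1 and let γ' = (γ'_1, …, γ'_{n−1}) ∈ ℕ₀^{n−1} be a multi-index. Then for all z, w ∈ T_B, |(z'−w')^{γ'}| ≤ 2^{|γ'|} |ρ(z,w)|^{|γ'|/2}, where (z'−w')^{γ'} = Π_{k=1}^{n−1} (z_k − w_k)^{γ'_k} and |γ'| = γ'_1 + ⋯ + γ'_{n−1}. -/
open MeasureTheory Complex ComplexConjugate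

noncomputable section

lemma rho2_re_eq (n : ℕ) (z w : Fin (n + 1) → ℂ) :
    (rho2 n z w).re = (∑ k : Fin n, normSq (z k.castSucc - w k.castSucc)) / 4
      + (rho n z + rho n w) / 2 := by
  simp only [rho2, rho, re_sum, re_sub_conj_sq, Finset.sum_sub_distrib, ← Finset.mul_sum,
    mul_re, sub_re, sub_im, mul_im, conj_re, conj_im, I_re, I_im, re_ofNat, im_ofNat,
    one_div, inv_re, inv_im, normSq_ofNat]
  ring

lemma normSq_sub_le_four_mul_norm_rho2 {n : ℕ} {z w : Fin (n + 1) → ℂ}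
    (hz : z ∈ TB n) (hw : w ∈ TB n) (k : Fin n) :
    normSq (z k.castSucc - w k.castSucc) ≤ 4 * ‖rho2 n z w‖ := by
  have hρz : 0 < rho n z := sub_pos.mpr hz
  have hρw : 0 < rho n w := sub_pos.mpr hw
  have hterm : normSq (z k.castSucc - w k.castSucc)
      ≤ ∑ j : Fin n, normSq (z j.castSucc - w j.castSucc) :=
    Finset.single_le_sum (f := fun j : Fin n => normSq (z j.castSucc - w j.castSucc))
      (fun j _ => normSq_nonneg _) (Finset.mem_univ k)
  have hre := re_le_norm (rho2 n z w)
  rw [rho2_re_eq] at hre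
  linarith

lemma norm_sub_le_two_mul_sqrt_norm_rho2 {n : ℕ} {z w : Fin (n + 1) → ℂ}
    (hz : z ∈ TB n) (hw : w ∈ TB n) (k : Fin n) :
    ‖z k.castSucc - w k.castSucc‖ ≤ 2 * √‖rho2 n z w‖ := by
  calc ‖z k.castSucc - w k.castSucc‖ = √(normSq (z k.castSucc - w k.castSucc)) := norm_def _
    _ ≤ √(2 ^ 2 * ‖rho2 n z w‖) := by
        gcongr
        linarith [normSq_sub_le_four_mul_norm_rho2 hz hw k]
    _ = 2 * √‖rho2 n z w‖ := by rw [Real.sqrt_mul (by norm_num), Real.sqrt_sq (by norm_num)]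

lemma norm_prod_pow_le_pow_sum {ι E : Type*} [Fintype ι] [NormedCommRing E] [NormOneClass E]
    [NormMulClass E] (a : ι → E) (γ : ι → ℕ) {c : ℝ} (ha : ∀ i, ‖a i‖ ≤ c) :
    ‖∏ i, a i ^ γ i‖ ≤ c ^ ∑ i, γ i := by
  rw [norm_prod, ← Finset.prod_pow_eq_pow_sum]
  gcongr with i
  rw [norm_pow]
  exact pow_le_pow_left₀ (norm_nonneg _) (ha i) _

lemma mul_sqrt_pow (a : ℝ) {r : ℝ} (hr : 0 ≤ r) (m : ℕ) :
    (a * √r) ^ m = a ^ m * r ^ ((m : ℝ) / 2) := by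
  rw [mul_pow, Real.sqrt_eq_rpow, ← Real.rpow_natCast (r ^ _), ← Real.rpow_mul hr,
    one_div_mul_eq_div]

theorem stmt10 (n : ℕ) (γ : Fin n → ℕ) (z w : Fin (n + 1) → ℂ)
    (hz : z ∈ TB n) (hw : w ∈ TB n) :
    ‖∏ k : Fin n, (z k.castSucc - w k.castSucc) ^ γ k‖ ≤
      2 ^ (∑ k : Fin n, γ k)
        * ‖rho2 n z w‖ ^ (((∑ k : Fin n, γ k : ℕ) : ℝ) / 2) := by
  rw [← mul_sqrt_pow _ (norm_nonneg _)]
  exact norm_prod_pow_le_pow_sum _ γ (norm_sub_le_two_mul_sqrt_norm_rho2 hz hw)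
end
end

section
/- Let n ≥ 1 and let g : T_B → ℂ be twice continuously differentiable (as a function of the underlying real variables). Then (Δ̃g)(𝐢) = 4 Σ_{j=1}^{n} ∂²(g∘Φ)/∂z_j∂z̄_j (0), where Δ̃g(z) = 8ρ(z)[ Σ_{j=1}^{n−1} ∂²g/∂z_j∂z̄_j(z) + Σ_{j=1}^{n−1} 2y_j ∂²g/∂z_n∂z̄_j(z) + Σ_{j=1}^{n−1} 2y_j ∂²g/∂z̄_n∂z_j(z) + 2(y_n + |y'|²) ∂²g/∂z̄_n∂z_n(z) ]. -/
open MeasureTheory Complex ComplexConjugate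

noncomputable section

/-- The invariant Laplacian `Δ̃` on `T_B`. -/
def invLap (n : ℕ) (g : (Fin (n + 1) → ℂ) → ℂ) (z : Fin (n + 1) → ℂ) : ℂ :=
  8 * ((rho n z : ℝ) : ℂ) *
    ((∑ j : Fin n, wdz n j.castSucc (wdzbar n j.castSucc g) z)
      + (∑ j : Fin n, 2 * ((z j.castSucc).im : ℂ) * wdz n (Fin.last n) (wdzbar n j.castSucc g) z)
      + (∑ j : Fin n, 2 * ((z j.castSucc).im : ℂ) * wdzbar n (Fin.last n) (wdz n j.castSucc g) z)
      + 2 * ((((z (Fin.last n)).im + ∑ j : Fin n, (z j.castSucc).im ^ 2 : ℝ)) : ℂ)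
          * wdzbar n (Fin.last n) (wdz n (Fin.last n) g) z)

/-- The Cayley transform `Φ : 𝔹 → T_B`. -/
def Phi (n : ℕ) (ξ : Fin (n + 1) → ℂ) : Fin (n + 1) → ℂ := fun j =>
  if j = Fin.last n then
    Complex.I * (1 - ξ (Fin.last n)) / (1 + ξ (Fin.last n))
      - Complex.I * (∑ k : Fin n, ξ k.castSucc ^ 2) / (1 + ξ (Fin.last n)) ^ 2
  else ((Real.sqrt 2 : ℝ) : ℂ) * ξ j / (1 + ξ (Fin.last n))

open Filter Topology

/-!
The Cayley transform is holomorphic, with `Φ 0 = 𝐢` and `Φ'(0) = diag(√2, …, √2, -2i)`. For a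
`C²` function `g` and a holomorphic map `f`, the Levi form `∂_u ∂̄_u` transforms as
`∂_u ∂̄_u (g ∘ f)(x) = ∂_{f'(x)u} ∂̄_{f'(x)u} g(f x)`: in the second-order chain rule
`D²(g ∘ f) = D²g(f'·, f'·) + Dg(D²f)` the last term drops out of the `∂∂̄` combination because
`D²f` is complex bilinear. Hence `∂_j ∂̄_j (g ∘ Φ)(0)` is `2 ∂_j ∂̄_j g(𝐢)` for `j < n` and
`4 ∂_n ∂̄_n g(𝐢)` for `j = n`. At `𝐢` we have `ρ = 1`, `y' = 0`, `y_n = 1`, and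
`∂̄_n ∂_n g = ∂_n ∂̄_n g` by symmetry of the real Hessian, which gives the identity.
-/

section SecondDerivative

variable {𝕜 : Type*} [NontriviallyNormedField 𝕜]
  {E F G : Type*} [NormedAddCommGroup E] [NormedSpace 𝕜 E] [NormedAddCommGroup F]
  [NormedSpace 𝕜 F] [NormedAddCommGroup G] [NormedSpace 𝕜 G]

theorem fderiv_fderiv_apply_const {h : E → F} {x : E} (hd : DifferentiableAt 𝕜 (fderiv 𝕜 h) x)
    (u w : E) : fderiv 𝕜 (fun z => fderiv 𝕜 h z u) x w = fderiv 𝕜 (fderiv 𝕜 h) x w u := by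
  rw [fderiv_clm_apply hd (differentiableAt_const u)]
  simp

theorem fderiv_fderiv_comp_apply {f : E → F} {g : F → G} {x : E}
    (hg : ContDiffAt 𝕜 2 g (f x)) (hf : ContDiffAt 𝕜 2 f x) (v w : E) :
    fderiv 𝕜 (fderiv 𝕜 (g ∘ f)) x v w =
      fderiv 𝕜 (fderiv 𝕜 g) (f x) (fderiv 𝕜 f x v) (fderiv 𝕜 f x w) +
        fderiv 𝕜 g (f x) (fderiv 𝕜 (fderiv 𝕜 f) x v w) := by
  have hchain : fderiv 𝕜 (g ∘ f) =ᶠ[𝓝 x] fun y => (fderiv 𝕜 g (f y)).comp (fderiv 𝕜 f y) := by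
    filter_upwards [hf.continuousAt.eventually (hg.eventually (by simp)), hf.eventually (by simp)]
      with y hgy hfy
    exact fderiv_comp y (hgy.differentiableAt two_ne_zero) (hfy.differentiableAt two_ne_zero)
  have hdg : DifferentiableAt 𝕜 (fderiv 𝕜 g) (f x) :=
    (hg.fderiv_right_succ (n := 1)).differentiableAt one_ne_zero
  have hdf : DifferentiableAt 𝕜 (fderiv 𝕜 f) x :=
    (hf.fderiv_right_succ (n := 1)).differentiableAt one_ne_zero
  rw [hchain.fderiv_eq,
    fderiv_clm_comp (c := fun y => fderiv 𝕜 g (f y)) (hdg.comp x (hf.differentiableAt two_ne_zero))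
      hdf,
    fderiv_fun_comp x hdg (hf.differentiableAt two_ne_zero)]
  simp [add_comm]

end SecondDerivative

section LeviForm

variable {E F : Type*} [NormedAddCommGroup E] [NormedSpace ℂ E] [NormedAddCommGroup F]
  [NormedSpace ℂ F]

theorem ContDiffAt.fderiv_fderiv_restrictScalars_apply {f : E → F} {x : E}
    (hf : ContDiffAt ℂ 2 f x) (v w : E) :
    fderiv ℝ (fderiv ℝ f) x v w = fderiv ℂ (fderiv ℂ f) x v w := by
  have hrestr : fderiv ℝ f =ᶠ[𝓝 x]
      fun y => ContinuousLinearMap.restrictScalarsL ℂ E F ℝ ℝ (fderiv ℂ f y) := by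
    filter_upwards [hf.eventually (by simp)] with y hy
    exact (hy.differentiableAt two_ne_zero).fderiv_restrictScalars ℝ
  have hdf : DifferentiableAt ℂ (fderiv ℂ f) x :=
    (hf.fderiv_right_succ (n := 1)).differentiableAt one_ne_zero
  rw [hrestr.fderiv_eq, fderiv_fun_comp x (ContinuousLinearMap.differentiableAt _)
    (hdf.restrictScalars ℝ), ContinuousLinearMap.fderiv, hdf.fderiv_restrictScalars ℝ]
  rfl

/-- `leviForm (D²h x) u = ∂_u ∂̄_u h (x)`, the complex Hessian read off the real one. -/
def leviForm (H : E →L[ℝ] E →L[ℝ] ℂ) (u : E) : ℂ :=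
  (1 / 4) * (H u u + I * H u (I • u) - I * H (I • u) u + H (I • u) (I • u))

theorem leviForm_smul (H : E →L[ℝ] E →L[ℝ] ℂ) (c : ℂ) (u : E) :
    leviForm H (c • u) = normSq c * leviForm H u := by
  have hc : c • u = c.re • u + c.im • (I • u) := by
    conv_lhs => rw [← re_add_im c]
    rw [add_smul, mul_smul, Complex.coe_smul, Complex.coe_smul]
  have hIc : I • c • u = c.re • (I • u) - c.im • u := by
    rw [hc, smul_add, smul_comm I c.im, smul_smul I I, I_mul_I, neg_one_smul, smul_neg,
      smul_comm, sub_eq_add_neg]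
  rw [leviForm, leviForm, hIc, hc]
  simp only [map_add, map_sub, map_smul, add_apply, sub_apply, smul_apply, real_smul,
    normSq_apply]
  push_cast
  ring

theorem leviForm_fderiv_fderiv_comp {f : E → F} {g : F → ℂ} {x : E}
    (hg : ContDiffAt ℝ 2 g (f x)) (hf : ContDiffAt ℂ 2 f x) (u : E) :
    leviForm (fderiv ℝ (fderiv ℝ (g ∘ f)) x) u =
      leviForm (fderiv ℝ (fderiv ℝ g) (f x)) (fderiv ℂ f x u) := by
  have hDf : fderiv ℝ f x = (fderiv ℂ f x).restrictScalars ℝ :=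
    (hf.differentiableAt two_ne_zero).fderiv_restrictScalars ℝ
  have hII : ∀ q : F, I • I • q = -q := fun q => by rw [smul_smul, I_mul_I, neg_one_smul]
  simp only [leviForm, fderiv_fderiv_comp_apply hg (hf.restrict_scalars ℝ),
    hf.fderiv_fderiv_restrictScalars_apply, hDf, ContinuousLinearMap.coe_restrictScalars',
    map_smul, smul_apply, hII, map_neg]
  ring

end LeviForm

section Wirtinger

variable {n : ℕ} {h : (Fin (n + 1) → ℂ) → ℂ} {x : Fin (n + 1) → ℂ}

theorem fderiv_wdzbar_apply (hd : DifferentiableAt ℝ (fderiv ℝ h) x) (j : Fin (n + 1))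
    (w : Fin (n + 1) → ℂ) :
    fderiv ℝ (wdzbar n j h) x w = (1 / 2) * (fderiv ℝ (fderiv ℝ h) x w (Pi.single j 1)
      + I * fderiv ℝ (fderiv ℝ h) x w (Pi.single j I)) := by
  have hp : ∀ u, DifferentiableAt ℝ (fun z => fderiv ℝ h z u) x := fun u =>
    hd.clm_apply (differentiableAt_const u)
  unfold wdzbar
  rw [fderiv_const_mul ((hp _).fun_add ((hp _).const_mul I)), fderiv_fun_add (hp _)
    ((hp _).const_mul I), fderiv_const_mul (hp _)]
  simp only [add_apply, smul_apply, fderiv_fderiv_apply_const hd, smul_eq_mul]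

theorem fderiv_wdz_apply (hd : DifferentiableAt ℝ (fderiv ℝ h) x) (j : Fin (n + 1))
    (w : Fin (n + 1) → ℂ) :
    fderiv ℝ (wdz n j h) x w = (1 / 2) * (fderiv ℝ (fderiv ℝ h) x w (Pi.single j 1)
      - I * fderiv ℝ (fderiv ℝ h) x w (Pi.single j I)) := by
  have hp : ∀ u, DifferentiableAt ℝ (fun z => fderiv ℝ h z u) x := fun u =>
    hd.clm_apply (differentiableAt_const u)
  unfold wdz
  rw [fderiv_const_mul ((hp _).fun_sub ((hp _).const_mul I)), fderiv_fun_sub (hp _)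
    ((hp _).const_mul I), fderiv_const_mul (hp _)]
  simp only [sub_apply, smul_apply, fderiv_fderiv_apply_const hd, smul_eq_mul]

theorem wdz_wdzbar_self_eq_leviForm (hh : ContDiffAt ℝ 2 h x) (j : Fin (n + 1)) :
    wdz n j (wdzbar n j h) x = leviForm (fderiv ℝ (fderiv ℝ h) x) (Pi.single j 1) := by
  have hd : DifferentiableAt ℝ (fderiv ℝ h) x :=
    (hh.fderiv_right_succ (n := 1)).differentiableAt one_ne_zero
  rw [wdz, fderiv_wdzbar_apply hd, fderiv_wdzbar_apply hd, leviForm, ← Pi.single_smul', smul_eq_mul,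
    mul_one]
  ring_nf
  rw [I_sq]
  ring

theorem wdzbar_wdz_comm (hh : ContDiffAt ℝ 2 h x) (j k : Fin (n + 1)) :
    wdzbar n k (wdz n j h) x = wdz n j (wdzbar n k h) x := by
  have hd : DifferentiableAt ℝ (fderiv ℝ h) x :=
    (hh.fderiv_right_succ (n := 1)).differentiableAt one_ne_zero
  have hsymm := hh.isSymmSndFDerivAt (by simp)
  rw [wdzbar, wdz, fderiv_wdz_apply hd, fderiv_wdz_apply hd, fderiv_wdzbar_apply hd,
    fderiv_wdzbar_apply hd, hsymm (Pi.single j 1) (Pi.single k 1),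
    hsymm (Pi.single j 1) (Pi.single k I), hsymm (Pi.single j I) (Pi.single k 1),
    hsymm (Pi.single j I) (Pi.single k I)]
  ring

theorem wdz_wdzbar_comp_of_fderiv_single {f : (Fin (n + 1) → ℂ) → Fin (n + 1) → ℂ}
    {g : (Fin (n + 1) → ℂ) → ℂ} (hg : ContDiffAt ℝ 2 g (f x))
    (hf : ContDiffAt ℂ 2 f x) {j : Fin (n + 1)} {c : ℂ}
    (hc : fderiv ℂ f x (Pi.single j 1) = c • Pi.single j 1) :
    wdz n j (wdzbar n j (g ∘ f)) x = normSq c * wdz n j (wdzbar n j g) (f x) := by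
  rw [wdz_wdzbar_self_eq_leviForm (hg.comp x (hf.restrict_scalars ℝ)),
    leviForm_fderiv_fderiv_comp hg hf, hc, leviForm_smul, wdz_wdzbar_self_eq_leviForm hg]

end Wirtinger

section Cayley

variable {n : ℕ}

theorem contDiffAt_Phi {ξ : Fin (n + 1) → ℂ} (hξ : 1 + ξ (Fin.last n) ≠ 0) :
    ContDiffAt ℂ 2 (Phi n) ξ := by
  rw [contDiffAt_pi]
  intro a
  unfold Phi
  split_ifs
  · fun_prop (disch := simpa)
  · fun_prop (disch := simpa)

theorem Phi_zero : Phi n 0 = iPt n := by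
  funext j
  by_cases h : j = Fin.last n <;> simp [Phi, iPt, h]

theorem hasDerivAt_Phi_single (j : Fin (n + 1)) :
    HasDerivAt (fun t : ℂ => Phi n (Pi.single j t)) (fderiv ℂ (Phi n) 0 (Pi.single j 1)) 0 := by
  have hPhi :=
    ((contDiffAt_Phi (n := n) (ξ := 0) (by simp)).differentiableAt two_ne_zero).hasFDerivAt
  rw [← Pi.single_zero j] at hPhi
  have h := hPhi.comp_hasDerivAt (0 : ℂ) (hasDerivAt_single j 0)
  rwa [Pi.single_zero] at h

theorem fderiv_Phi_zero_single_castSucc (i : Fin n) :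
    fderiv ℂ (Phi n) 0 (Pi.single i.castSucc 1) = (√2 : ℂ) • Pi.single i.castSucc 1 := by
  have hline : (fun t : ℂ => Phi n (Pi.single i.castSucc t)) =
      fun t => Pi.single i.castSucc ((√2 : ℂ) * t) + Pi.single (Fin.last n) (I - I * t ^ 2) := by
    funext t a
    by_cases ha : a = Fin.last n
    · subst ha
      simp [Phi, Pi.single_apply, (Fin.castSucc_lt_last i).ne]
    · simp [Phi, ha, Pi.single_apply]
  have hlin : HasDerivAt (fun t : ℂ => (√2 : ℂ) * t) (√2 : ℂ) 0 := by
    simpa using (hasDerivAt_id' (0 : ℂ)).const_mul (√2 : ℂ)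
  have hquad : HasDerivAt (fun t : ℂ => I - I * t ^ 2) 0 0 := by
    simpa using ((hasDerivAt_pow 2 (0 : ℂ)).const_mul I).const_sub I
  refine (hasDerivAt_Phi_single _).unique ?_
  rw [hline]
  simpa using ((hasDerivAt_single i.castSucc _).scomp (0 : ℂ) hlin).fun_add
    ((hasDerivAt_single (Fin.last n) _).scomp (0 : ℂ) hquad)

theorem fderiv_Phi_zero_single_last :
    fderiv ℂ (Phi n) 0 (Pi.single (Fin.last n) 1) = (-2 * I) • Pi.single (Fin.last n) 1 := by
  have hline : (fun t : ℂ => Phi n (Pi.single (Fin.last n) t)) =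
      fun t => Pi.single (Fin.last n) (I * (1 - t) / (1 + t)) := by
    funext t a
    by_cases ha : a = Fin.last n
    · subst ha
      simp [Phi]
    · simp [Phi, ha]
  have hmobius : HasDerivAt (fun t : ℂ => I * (1 - t) / (1 + t)) (-2 * I) 0 := by
    refine ((((hasDerivAt_id' (0 : ℂ)).const_sub 1).const_mul I).fun_div
      ((hasDerivAt_id' (0 : ℂ)).const_add 1) (by simp)).congr_deriv ?_
    ring
  refine (hasDerivAt_Phi_single _).unique ?_
  rw [hline]
  exact (hasDerivAt_single (Fin.last n) _).scomp (0 : ℂ) hmobius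

theorem isOpen_TB : IsOpen (TB n) :=
  isOpen_lt (by fun_prop) (by fun_prop)

theorem iPt_mem_TB : iPt n ∈ TB n := by
  simp [TB, iPt, (Fin.castSucc_lt_last _).ne]

theorem invLap_iPt (g : (Fin (n + 1) → ℂ) → ℂ) :
    invLap n g (iPt n) = 8 * (∑ j : Fin n, wdz n j.castSucc (wdzbar n j.castSucc g) (iPt n)
      + 2 * wdzbar n (Fin.last n) (wdz n (Fin.last n) g) (iPt n)) := by
  simp [invLap, rho, iPt, (Fin.castSucc_lt_last _).ne]

end Cayley

theorem stmt16 (n : ℕ) (g : (Fin (n + 1) → ℂ) → ℂ) (hg : ContDiffOn ℝ 2 g (TB n)) :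
    invLap n g (iPt n) = 4 * ∑ j : Fin (n + 1), wdz n j (wdzbar n j (g ∘ Phi n)) 0 := by
  have hgi : ContDiffAt ℝ 2 g (iPt n) := hg.contDiffAt (isOpen_TB.mem_nhds iPt_mem_TB)
  have hgΦ : ContDiffAt ℝ 2 g (Phi n 0) := Phi_zero (n := n) ▸ hgi
  have hΦ : ContDiffAt ℂ 2 (Phi n) 0 := contDiffAt_Phi (by simp)
  have hcastSucc (i : Fin n) : wdz n i.castSucc (wdzbar n i.castSucc (g ∘ Phi n)) 0 =
      2 * wdz n i.castSucc (wdzbar n i.castSucc g) (iPt n) := by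
    rw [wdz_wdzbar_comp_of_fderiv_single hgΦ hΦ (fderiv_Phi_zero_single_castSucc i), Phi_zero,
      normSq_ofReal, Real.mul_self_sqrt zero_le_two, ofReal_ofNat]
  have hlast : wdz n (Fin.last n) (wdzbar n (Fin.last n) (g ∘ Phi n)) 0 =
      4 * wdz n (Fin.last n) (wdzbar n (Fin.last n) g) (iPt n) := by
    rw [wdz_wdzbar_comp_of_fderiv_single hgΦ hΦ fderiv_Phi_zero_single_last, Phi_zero]
    norm_num [normSq_apply]
  rw [invLap_iPt, wdzbar_wdz_comm hgi, Fin.sum_univ_castSucc, hlast,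
    Finset.sum_congr rfl fun i _ => hcastSucc i, ← Finset.mul_sum]
  ring
end
end

section
/- Let n ≥ 1 and α > −1. For every fixed z ∈ T_B, ∫_{T_B} ρ(w)^α · |ρ(z,w)|^{−(n+1+α)} dV(w) = +∞; that is, the weighted Bergman kernel K_α(z,·) does not belong to L¹(T_B, dV_α). -/
open MeasureTheory Complex ComplexConjugate

noncomputable section

/-!
Let `B_T` be the parabolic box of points `w` with `Re w_k ∈ [0, √T]`, `Im w_k ∈ [0, √T/(n+1)]`
for `k < n` and `Re w_n ∈ [0, T]`, `Im w_n ∈ [T, 2T)`. For `T ≥ 1` both `ρ(w)` and `|ρ(z,w)|` are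
comparable to `T` on `B_T` (from below via `|ρ(z,w)| ≥ Re ρ(z,w) ≥ (ρ(z) + ρ(w))/2`), so the
integrand is `≳ T^α · T^(-(n+2+α)) = T^(-(n+2))` there, while `vol B_T = T^(n+2)/(n+1)^n`.
Every box thus contributes the same positive amount, and the dyadic boxes `B_(2^m)` are disjoint.
-/

open scoped ENNReal
open Set Function

lemma Complex.volume_reProdIm (s t : Set ℝ) : volume (s ×ℂ t) = volume s * volume t := by
  rw [← Measure.prod_prod, ← Measure.volume_eq_prod,
    ← Complex.volume_preserving_equiv_real_prod.measure_preimage_equiv]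
  rfl

lemma Complex.measurableSet_reProdIm {s t : Set ℝ} (hs : MeasurableSet s) (ht : MeasurableSet t) :
    MeasurableSet (s ×ℂ t) :=
  (Complex.measurable_re hs).inter (Complex.measurable_im ht)

lemma Real.min_rpow_mul_rpow_le {a b A x : ℝ} (p : ℝ) (ha : 0 < a) (hA : 0 < A)
    (hlo : a * A ≤ x) (hhi : x ≤ b * A) : min (a ^ p) (b ^ p) * A ^ p ≤ x ^ p := by
  have hx : 0 < x := (mul_pos ha hA).trans_le hlo
  have hb : 0 ≤ b := le_of_mul_le_mul_right (by linarith : 0 * A ≤ b * A) hA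
  rcases le_or_gt 0 p with hp | hp
  · calc min (a ^ p) (b ^ p) * A ^ p ≤ a ^ p * A ^ p := by gcongr; exact min_le_left _ _
      _ = (a * A) ^ p := (Real.mul_rpow ha.le hA.le).symm
      _ ≤ x ^ p := Real.rpow_le_rpow (by positivity) hlo hp
  · calc min (a ^ p) (b ^ p) * A ^ p ≤ b ^ p * A ^ p := by gcongr; exact min_le_right _ _
      _ = (b * A) ^ p := (Real.mul_rpow hb hA.le).symm
      _ ≤ x ^ p := Real.rpow_le_rpow_of_nonpos hx hhi hp.le

lemma lintegral_eq_top_of_forall_le_setLIntegral {α : Type*} [MeasurableSpace α] {μ : Measure α}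
    {f : α → ℝ≥0∞} {s : Set α} {B : ℕ → Set α} (hB : ∀ m, MeasurableSet (B m))
    (hdisj : Pairwise (Disjoint on B)) (hsub : ∀ m, B m ⊆ s) {ε : ℝ≥0∞} (hε : ε ≠ 0)
    (hle : ∀ m, ε ≤ ∫⁻ x in B m, f x ∂μ) : ∫⁻ x in s, f x ∂μ = ⊤ := by
  refine top_le_iff.mp ?_
  calc ⊤ = ∑' _ : ℕ, ε := (ENNReal.tsum_const_eq_top_of_ne_zero hε).symm
    _ ≤ ∑' m, ∫⁻ x in B m, f x ∂μ := ENNReal.tsum_le_tsum hle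
    _ = ∫⁻ x in ⋃ m, B m, f x ∂μ := (lintegral_iUnion hB hdisj f).symm
    _ ≤ ∫⁻ x in s, f x ∂μ := lintegral_mono_set (iUnion_subset hsub)

section TubeDomain

variable {n : ℕ}

lemma half_rho_add_rho_le_re_rho2 (z w : Fin (n + 1) → ℂ) :
    (rho n z + rho n w) / 2 ≤ (rho2 n z w).re := by
  have hre : (rho2 n z w).re = (∑ k : Fin n, (((z k.castSucc).re - (w k.castSucc).re) ^ 2
      - ((z k.castSucc).im + (w k.castSucc).im) ^ 2)
      + 2 * ((z (Fin.last n)).im + (w (Fin.last n)).im)) / 4 := by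
    simp only [rho2, Complex.mul_re, Complex.sub_re, Complex.mul_im, Complex.sub_im,
      Complex.re_sum, Complex.im_sum, Complex.conj_re, Complex.conj_im, Complex.I_re,
      Complex.I_im, pow_two]
    norm_num
    ring
  have hterm : ∀ k : Fin n, -2 * ((z k.castSucc).im ^ 2 + (w k.castSucc).im ^ 2)
      ≤ ((z k.castSucc).re - (w k.castSucc).re) ^ 2 - ((z k.castSucc).im + (w k.castSucc).im) ^ 2 :=
    fun k => by
      nlinarith [sq_nonneg ((z k.castSucc).re - (w k.castSucc).re),
        sq_nonneg ((z k.castSucc).im - (w k.castSucc).im)]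
  have hsum := Finset.sum_le_sum (s := Finset.univ) fun k _ => hterm k
  rw [← Finset.mul_sum, Finset.sum_add_distrib] at hsum
  rw [hre, rho, rho]
  linarith

lemma norm_rho2_le (z w : Fin (n + 1) → ℂ) :
    ‖rho2 n z w‖ ≤ ∑ k : Fin n, (‖z k.castSucc‖ + ‖w k.castSucc‖) ^ 2
      + 2 * (‖z (Fin.last n)‖ + ‖w (Fin.last n)‖) := by
  have hconj : ∀ j, ‖z j - conj (w j)‖ ≤ ‖z j‖ + ‖w j‖ := fun j =>
    (norm_sub_le _ _).trans_eq (by rw [Complex.norm_conj])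
  have hsum : ‖∑ k : Fin n, (z k.castSucc - conj (w k.castSucc)) ^ 2‖
      ≤ ∑ k : Fin n, (‖z k.castSucc‖ + ‖w k.castSucc‖) ^ 2 :=
    (norm_sum_le _ _).trans <| Finset.sum_le_sum fun k _ => by
      rw [norm_pow]; gcongr; exact hconj _
  have hlast : ‖2 * Complex.I * (z (Fin.last n) - conj (w (Fin.last n)))‖
      ≤ 2 * (‖z (Fin.last n)‖ + ‖w (Fin.last n)‖) := by
    simpa using mul_le_mul_of_nonneg_left (hconj (Fin.last n)) zero_le_two
  calc ‖rho2 n z w‖ ≤ 1 * (‖∑ k : Fin n, (z k.castSucc - conj (w k.castSucc)) ^ 2‖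
        + ‖2 * Complex.I * (z (Fin.last n) - conj (w (Fin.last n)))‖) := by
        rw [rho2, norm_mul]
        gcongr
        · norm_num
        · exact norm_sub_le _ _
    _ ≤ _ := by linarith

def parabolicBox (n : ℕ) (T : ℝ) : Set (Fin (n + 1) → ℂ) :=
  univ.pi (Fin.snoc (fun _ => Icc 0 √T ×ℂ Icc 0 (√T / (n + 1))) (Icc 0 T ×ℂ Ico T (2 * T)))

lemma mem_parabolicBox {T : ℝ} {w : Fin (n + 1) → ℂ} :
    w ∈ parabolicBox n T ↔
      (∀ k : Fin n, (w k.castSucc).re ∈ Icc 0 √T ∧ (w k.castSucc).im ∈ Icc 0 (√T / (n + 1)))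
      ∧ (w (Fin.last n)).re ∈ Icc 0 T ∧ (w (Fin.last n)).im ∈ Ico T (2 * T) := by
  simp only [parabolicBox, mem_univ_pi, Fin.forall_fin_succ', Fin.snoc_castSucc, Fin.snoc_last,
    Complex.mem_reProdIm]

lemma measurableSet_parabolicBox (n : ℕ) (T : ℝ) : MeasurableSet (parabolicBox n T) :=
  MeasurableSet.univ_pi <| Fin.lastCases
    (by simpa using Complex.measurableSet_reProdIm measurableSet_Icc measurableSet_Ico)
    fun _ => by simpa using Complex.measurableSet_reProdIm measurableSet_Icc measurableSet_Icc

lemma volume_parabolicBox {T : ℝ} (hT : 0 ≤ T) :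
    volume (parabolicBox n T) = ENNReal.ofReal (T ^ (n + 2) / (n + 1) ^ n) := by
  simp only [parabolicBox, volume_pi_pi, Fin.prod_univ_castSucc, Fin.snoc_castSucc,
    Fin.snoc_last, Complex.volume_reProdIm, Real.volume_Icc, Real.volume_Ico, Finset.prod_const,
    Finset.card_univ, Fintype.card_fin]
  rw [sub_zero, sub_zero, sub_zero, two_mul, add_sub_cancel_right,
    ← ENNReal.ofReal_mul (Real.sqrt_nonneg T), ← ENNReal.ofReal_pow (by positivity),
    ← ENNReal.ofReal_mul hT, ← ENNReal.ofReal_mul (by positivity)]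
  congr 1
  rw [mul_div_assoc', Real.mul_self_sqrt hT, div_pow]
  field_simp
  ring

variable {T : ℝ} {w : Fin (n + 1) → ℂ}

lemma sum_im_sq_le_of_mem_parabolicBox (hT : 0 ≤ T) (hw : w ∈ parabolicBox n T) :
    ∑ k : Fin n, (w k.castSucc).im ^ 2 ≤ T / 2 := by
  have hk : ∀ k : Fin n, (w k.castSucc).im ^ 2 ≤ T / (n + 1) ^ 2 := fun k => by
    obtain ⟨h0, h1⟩ := ((mem_parabolicBox.mp hw).1 k).2
    calc (w k.castSucc).im ^ 2 ≤ (√T / (n + 1)) ^ 2 := by gcongr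
      _ = T / (n + 1) ^ 2 := by rw [div_pow, Real.sq_sqrt hT]
  calc ∑ k : Fin n, (w k.castSucc).im ^ 2 ≤ n * (T / (n + 1) ^ 2) := by
        simpa using Finset.sum_le_sum (s := Finset.univ) fun k _ => hk k
    _ ≤ T / 2 := by
        rw [mul_div_assoc', div_le_div_iff₀ (by positivity) two_pos]
        nlinarith [mul_nonneg hT (sq_nonneg ((n : ℝ) - 1))]

lemma rho_mem_Icc_of_mem_parabolicBox (hT : 0 ≤ T) (hw : w ∈ parabolicBox n T) :
    rho n w ∈ Icc (T / 2) (2 * T) := by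
  have him := (mem_parabolicBox.mp hw).2.2
  have hsum := sum_im_sq_le_of_mem_parabolicBox hT hw
  have hsum_nonneg : 0 ≤ ∑ k : Fin n, (w k.castSucc).im ^ 2 :=
    Finset.sum_nonneg fun _ _ => sq_nonneg _
  constructor <;> rw [rho] <;> linarith [him.1, him.2]

lemma parabolicBox_subset_TB (hT : 0 < T) : parabolicBox n T ⊆ TB n := fun w hw => by
  have hρ := (rho_mem_Icc_of_mem_parabolicBox hT.le hw).1
  rw [rho] at hρ
  simp only [TB, mem_ofPred_eq]
  linarith

lemma norm_rho2_le_of_mem_parabolicBox (z : Fin (n + 1) → ℂ) (hT : 1 ≤ T)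
    (hw : w ∈ parabolicBox n T) :
    ‖rho2 n z w‖ ≤ (n * (‖z‖ + 2) ^ 2 + 2 * ‖z‖ + 6) * T := by
  obtain ⟨hw', hre, him⟩ := mem_parabolicBox.mp hw
  have hsqrt : 1 ≤ √T := Real.one_le_sqrt.mpr hT
  have hk : ∀ k : Fin n, ‖z k.castSucc‖ + ‖w k.castSucc‖ ≤ (‖z‖ + 2) * √T := fun k => by
    obtain ⟨⟨hre0, hre1⟩, him0, him1⟩ := hw' k
    have him2 : (w k.castSucc).im ≤ √T :=
      him1.trans (div_le_self (Real.sqrt_nonneg T) (by linarith [n.cast_nonneg (α := ℝ)]))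
    have := Complex.norm_le_abs_re_add_abs_im (w k.castSucc)
    rw [abs_of_nonneg hre0, abs_of_nonneg him0] at this
    nlinarith [norm_le_pi_norm z k.castSucc, norm_nonneg z]
  have hlast : ‖z (Fin.last n)‖ + ‖w (Fin.last n)‖ ≤ ‖z‖ + 3 * T := by
    have := Complex.norm_le_abs_re_add_abs_im (w (Fin.last n))
    rw [abs_of_nonneg hre.1, abs_of_nonneg (by linarith [him.1])] at this
    linarith [norm_le_pi_norm z (Fin.last n), hre.2, him.2]
  have hsum : ∑ k : Fin n, (‖z k.castSucc‖ + ‖w k.castSucc‖) ^ 2 ≤ n * ((‖z‖ + 2) ^ 2 * T) := by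
    calc _ ≤ ∑ _k : Fin n, ((‖z‖ + 2) * √T) ^ 2 :=
          Finset.sum_le_sum fun k _ => by gcongr; exact hk k
      _ = n * ((‖z‖ + 2) ^ 2 * T) := by
          rw [Finset.sum_const, Finset.card_univ, Fintype.card_fin, nsmul_eq_mul, mul_pow,
            Real.sq_sqrt (by linarith)]
  nlinarith [norm_rho2_le z w, norm_nonneg z]

lemma quarter_le_norm_rho2_of_mem_parabolicBox {z : Fin (n + 1) → ℂ} (hz : z ∈ TB n)
    (hT : 0 ≤ T) (hw : w ∈ parabolicBox n T) : T / 4 ≤ ‖rho2 n z w‖ := by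
  have hρz : 0 < rho n z := by rw [rho]; exact sub_pos.mpr hz
  have hρw := (rho_mem_Icc_of_mem_parabolicBox hT hw).1
  linarith [half_rho_add_rho_le_re_rho2 z w, Complex.re_le_norm (rho2 n z w)]

lemma pairwise_disjoint_parabolicBox_two_pow (n : ℕ) :
    Pairwise (Disjoint on fun m : ℕ => parabolicBox n (2 ^ m)) := by
  have hlt : ∀ i j : ℕ, i < j → Disjoint (parabolicBox n (2 ^ i)) (parabolicBox n (2 ^ j)) :=
    fun i j hij => disjoint_left.mpr fun w hwi hwj => by
      have hi := (mem_parabolicBox.mp hwi).2.2.2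
      have hj := (mem_parabolicBox.mp hwj).2.2.1
      have : (2 : ℝ) * 2 ^ i ≤ 2 ^ j := by
        rw [← pow_succ']; exact pow_le_pow_right₀ one_le_two hij
      linarith
  exact fun i j hne => hne.lt_or_gt.elim (hlt i j) fun h => (hlt j i h).symm

lemma exists_pos_div_pow_le_of_mem_parabolicBox (α : ℝ) {z : Fin (n + 1) → ℂ} (hz : z ∈ TB n) :
    ∃ c > 0, ∀ T ≥ 1, ∀ w ∈ parabolicBox n T,
      c / T ^ (n + 2) ≤ rho n w ^ α * ‖rho2 n z w‖ ^ (-((n : ℝ) + 2 + α)) := by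
  set s : ℝ := n + 2 + α
  set C : ℝ := n * (‖z‖ + 2) ^ 2 + 2 * ‖z‖ + 6
  refine ⟨min (2⁻¹ ^ α) (2 ^ α) * min (4⁻¹ ^ (-s)) (C ^ (-s)), by positivity,
    fun T hT w hw => ?_⟩
  have hT0 : 0 < T := one_pos.trans_le hT
  have hρ := rho_mem_Icc_of_mem_parabolicBox hT0.le hw
  have hρ_pow := Real.min_rpow_mul_rpow_le (a := 2⁻¹) (b := 2) α (by norm_num) hT0
    (by rw [inv_mul_eq_div]; exact hρ.1) hρ.2
  have hρ2_pow := Real.min_rpow_mul_rpow_le (a := 4⁻¹) (b := C) (-s) (by norm_num) hT0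
    (by rw [inv_mul_eq_div]; exact quarter_le_norm_rho2_of_mem_parabolicBox hz hT0.le hw)
    (norm_rho2_le_of_mem_parabolicBox z hT hw)
  have hT_pow : T ^ α * T ^ (-s) = (T ^ (n + 2))⁻¹ := by
    rw [← Real.rpow_add hT0, ← Real.rpow_natCast, ← Real.rpow_neg hT0.le]
    congr 1
    push_cast
    ring
  calc _ = (min (2⁻¹ ^ α) (2 ^ α) * T ^ α) * (min (4⁻¹ ^ (-s)) (C ^ (-s)) * T ^ (-s)) := by
        rw [div_eq_mul_inv, ← hT_pow]; ring
    _ ≤ _ := mul_le_mul hρ_pow hρ2_pow (by positivity)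
        (Real.rpow_nonneg (by linarith [hρ.1]) _)

end TubeDomain

theorem stmt18_general (n : ℕ) (α : ℝ) (z : Fin (n + 1) → ℂ) (hz : z ∈ TB n) :
    ∫⁻ w in TB n,
        ENNReal.ofReal (rho n w ^ α * ‖rho2 n z w‖ ^ (-((n : ℝ) + 2 + α))) = ⊤ := by
  obtain ⟨c, hc, hle⟩ := exists_pos_div_pow_le_of_mem_parabolicBox α hz
  refine lintegral_eq_top_of_forall_le_setLIntegral (measurableSet_parabolicBox n <| 2 ^ ·)
    (pairwise_disjoint_parabolicBox_two_pow n) (fun m => parabolicBox_subset_TB (by positivity))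
    (ENNReal.ofReal_pos.mpr (by positivity : 0 < c / ((n : ℝ) + 1) ^ n)).ne' fun m => ?_
  have hT : (1 : ℝ) ≤ 2 ^ m := one_le_pow₀ one_le_two
  calc ENNReal.ofReal (c / ((n : ℝ) + 1) ^ n)
      = ENNReal.ofReal (c / (2 ^ m) ^ (n + 2)) * volume (parabolicBox n (2 ^ m)) := by
        rw [volume_parabolicBox (by positivity), ← ENNReal.ofReal_mul (by positivity)]
        congr 1
        field_simp
    _ = ∫⁻ _ in parabolicBox n (2 ^ m), ENNReal.ofReal (c / (2 ^ m) ^ (n + 2)) :=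
        (setLIntegral_const _ _).symm
    _ ≤ _ := setLIntegral_mono' (measurableSet_parabolicBox n _) fun w hw =>
        ENNReal.ofReal_le_ofReal (hle _ hT w hw)

theorem stmt18 (n : ℕ) (α : ℝ) (hα : -1 < α) (z : Fin (n + 1) → ℂ) (hz : z ∈ TB n) :
    ∫⁻ w in TB n,
        ENNReal.ofReal (rho n w ^ α * ‖rho2 n z w‖ ^ (-((n : ℝ) + 2 + α))) = ⊤ :=
  stmt18_general n α z hz
end
end

section
/- Let n ≥ 2, 1 ≤ p < ∞ and m > −1. If g : ℂ^{n−1} → ℂ is holomorphic and ∫_{T_B} ρ(z)^m |g(z')|^p dV(z) < ∞, where z' = (z_1, …, z_{n−1}), then g ≡ 0 on ℂ^{n−1}. -/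
open MeasureTheory Complex ComplexConjugate

noncomputable section

/-! The integrand `ρ(z)^t ‖g(z')‖^p` does not depend on `Re z_n`. If `g w ≠ 0`, continuity bounds
it below by a positive constant on a slab where `z'` is close to `w` and `Im z_n` is close to
`|Im w|² + 1`; this slab lies in `T_B` and, being unbounded in the direction of `Re z_n`, has
infinite volume, so the integral diverges. -/

open Set Metric

theorem MeasureTheory.lintegral_ofReal_eq_top_of_le_on {α : Type*} [MeasurableSpace α]
    {μ : Measure α} {f : α → ℝ} {S T : Set α} (hS : MeasurableSet S) (hST : S ⊆ T)
    (hμS : μ S = ⊤) {c : ℝ} (hc : 0 < c) (hf : ∀ x ∈ S, c ≤ f x) :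
    ∫⁻ x in T, ENNReal.ofReal (f x) ∂μ = ⊤ :=
  top_le_iff.mp <| calc
    ⊤ = ∫⁻ _ in S, ENNReal.ofReal c ∂μ := by
      rw [setLIntegral_const, hμS, ENNReal.mul_top (ENNReal.ofReal_pos.mpr hc).ne']
    _ ≤ ∫⁻ x in S, ENNReal.ofReal (f x) ∂μ :=
      setLIntegral_mono' hS fun x hx => ENNReal.ofReal_le_ofReal (hf x hx)
    _ ≤ ∫⁻ x in T, ENNReal.ofReal (f x) ∂μ := lintegral_mono_set hST

theorem MeasureTheory.Measure.pi_univ_pi_eq_top {ι : Type*} [Fintype ι] {X : ι → Type*}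
    [∀ i, MeasurableSpace (X i)] {μ : ∀ i, Measure (X i)} [∀ i, SigmaFinite (μ i)]
    {s : ∀ i, Set (X i)} (i : ι) (hi : μ i (s i) = ⊤) (hs : ∀ j, μ j (s j) ≠ 0) :
    Measure.pi μ (univ.pi s) = ⊤ := by
  rw [Measure.pi_pi]
  exact WithTop.prod_eq_top (Finset.mem_univ i) hi fun j _ => hs j

theorem Complex.volume_preimage_im_eq_top {s : Set ℝ} (hs : MeasurableSet s)
    (h : volume s ≠ 0) : volume (im ⁻¹' s) = ⊤ := by
  have : im ⁻¹' s = measurableEquivRealProd ⁻¹' (univ ×ˢ s) := by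
    ext z; simp [measurableEquivRealProd]
  rw [this, volume_preserving_equiv_real_prod.measure_preimage
    (MeasurableSet.univ.prod hs).nullMeasurableSet, Measure.volume_eq_prod,
    Measure.prod_prod, Real.volume_univ, ENNReal.top_mul h]

def tubeSlab {d : ℕ} (w : Fin d → ℂ) (s₀ r : ℝ) : Set (Fin (d + 1) → ℂ) :=
  univ.pi (Fin.lastCases (im ⁻¹' ball s₀ r) fun k => ball (w k) r)

section tubeSlab

variable {d : ℕ} {w : Fin d → ℂ} {s₀ r : ℝ}

theorem mem_tubeSlab (hr : 0 < r) {z : Fin (d + 1) → ℂ} :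
    z ∈ tubeSlab w s₀ r ↔ ((fun k => z k.castSucc), (z (Fin.last d)).im) ∈ ball (w, s₀) r := by
  rw [← ball_prod_same, mem_prod, ball_pi _ hr, tubeSlab, mem_univ_pi, Fin.forall_fin_succ']
  simp

theorem measurableSet_tubeSlab : MeasurableSet (tubeSlab w s₀ r) :=
  MeasurableSet.univ_pi fun j => by
    induction j using Fin.lastCases with
    | last => simpa using measurableSet_ball.preimage Complex.measurable_im
    | cast k => simpa using measurableSet_ball

theorem volume_tubeSlab (hr : 0 < r) : volume (tubeSlab w s₀ r) = ⊤ := by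
  have hstrip : volume (im ⁻¹' ball s₀ r) = ⊤ :=
    Complex.volume_preimage_im_eq_top measurableSet_ball (by simp [hr])
  rw [tubeSlab, volume_pi]
  refine Measure.pi_univ_pi_eq_top (Fin.last d) (by simpa using hstrip) fun j => ?_
  induction j using Fin.lastCases with
  | last => simp [hstrip]
  | cast k => simpa using (measure_ball_pos volume (w k) hr).ne'

end tubeSlab

theorem stmt19_general (d : ℕ) (p t : ℝ)
    (g : (Fin d → ℂ) → ℂ) (hg : Differentiable ℂ g)
    (hint : ∫⁻ z in TB d,
        ENNReal.ofReal (rho d z ^ t * ‖g fun k => z k.castSucc‖ ^ p) < ⊤) :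
    ∀ w : Fin d → ℂ, g w = 0 := by
  intro w
  by_contra hw
  set s₀ := ∑ k, (w k).im ^ 2 + 1
  let ρ : (Fin d → ℂ) × ℝ → ℝ := fun q => q.2 - ∑ k, (q.1 k).im ^ 2
  let G : (Fin d → ℂ) × ℝ → ℝ := fun q => ρ q ^ t * ‖g q.1‖ ^ p
  have hρ₀ : ρ (w, s₀) = 1 := by simp [ρ, s₀]
  have hρ : ContinuousAt ρ (w, s₀) := by fun_prop
  have hG : ContinuousAt G (w, s₀) :=
    (hρ.rpow_const (.inl (by simp [hρ₀]))).mul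
      ((hg.continuous.comp continuous_fst).norm.continuousAt.rpow_const (.inl (by simpa using hw)))
  have hG₀ : 0 < G (w, s₀) := by
    simpa [G, hρ₀] using Real.rpow_pos_of_pos (norm_pos_iff.mpr hw) p
  obtain ⟨r, hr, hball⟩ := eventually_nhds_iff_ball.mp
    ((hG.eventually (lt_mem_nhds (half_lt_self hG₀))).and
      (hρ.eventually (lt_mem_nhds (hρ₀ ▸ one_pos))))
  -- In the coordinates `(z', Im z_n)`, `TB d` is `{ρ > 0}` and the integrand is `G`.
  refine hint.ne (lintegral_ofReal_eq_top_of_le_on (S := tubeSlab w s₀ r) measurableSet_tubeSlab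
    (fun z hz => ?_) (volume_tubeSlab hr) (half_pos hG₀) fun z hz => ?_)
  · exact sub_pos.mp (hball _ ((mem_tubeSlab hr).mp hz)).2
  · exact (hball _ ((mem_tubeSlab hr).mp hz)).1.le

theorem stmt19 (d : ℕ) (hd : 0 < d) (p t : ℝ) (hp : 1 ≤ p) (ht : -1 < t)
    (g : (Fin d → ℂ) → ℂ) (hg : Differentiable ℂ g)
    (hint : ∫⁻ z in TB d,
        ENNReal.ofReal (rho d z ^ t * ‖g fun k => z k.castSucc‖ ^ p) < ⊤) :
    ∀ w : Fin d → ℂ, g w = 0 :=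
  stmt19_general d p t g hg hint
end
end
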